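/- The function Φ(u,v) = (1/√5)√(1 - u² - 3v²) + u³/6 satisfies Φ(u,v) ≤ 1/√5 for all (u,v) in the region Ω = {(u,v) : 0 ≤ u ≤ 1, 0 ≤ v ≤ √((1-u²)/3)}. -/
import Mathlib

open Real

theorem phi_bound (u v : ℝ) (hu0 : 0 ≤ u) (hu1 : u ≤ 1) (hv0 : 0 ≤ v)
    (hv : v ≤ Real.sqrt ((1 - u ^ 2) / 3)) :
    (1 / Real.sqrt 5) * Real.sqrt (1 - u ^ 2 - 3 * v ^ 2) + u ^ 3 / 6 ≤ 1 / Real.sqrt 5 := by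
  have h5 : (0:ℝ) < Real.sqrt 5 := Real.sqrt_pos.mpr (by norm_num)
  have h5le : Real.sqrt 5 ≤ 3 := by
    rw [show (3:ℝ) = Real.sqrt 9 by rw [show (9:ℝ) = 3^2 by norm_num, Real.sqrt_sq]; norm_num]
    exact Real.sqrt_le_sqrt (by norm_num)
  have h5ge : (2:ℝ) ≤ Real.sqrt 5 := by
    rw [show (2:ℝ) = Real.sqrt 4 by rw [show (4:ℝ) = 2^2 by norm_num, Real.sqrt_sq]; norm_num]
    exact Real.sqrt_le_sqrt (by norm_num)
  have h1 : Real.sqrt (1 - u ^ 2 - 3 * v ^ 2) ≤ Real.sqrt (1 - u ^ 2) :=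
    Real.sqrt_le_sqrt (by nlinarith [sq_nonneg v])
  have h2 : Real.sqrt (1 - u ^ 2) ≤ 1 - u ^ 2 / 2 := by
    have h := Real.sqrt_le_sqrt (show (1:ℝ) - u ^ 2 ≤ (1 - u ^ 2 / 2) ^ 2 by nlinarith [sq_nonneg u])
    rwa [Real.sqrt_sq (by nlinarith [sq_nonneg u])] at h
  have key : Real.sqrt (1 - u ^ 2 - 3 * v ^ 2) ≤ 1 - u ^ 2 / 2 := h1.trans h2
  have hinv : (1:ℝ)/3 ≤ 1 / Real.sqrt 5 :=
    one_div_le_one_div_of_le h5 h5le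
  have hinv0 : (0:ℝ) ≤ 1 / Real.sqrt 5 := by positivity
  have hkey2 := mul_le_mul_of_nonneg_left key hinv0
  have hu3 : u ^ 3 ≤ u ^ 2 := by nlinarith
  nlinarith [mul_le_mul_of_nonneg_right hinv (sq_nonneg u)]
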